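/- For all integers p, q, k with q ≥ 1, 2^q ≤ p−1 (i.e., q ≤ log₂(p−1)) and k ≥ q, we have g^k_q(p) ≥ ⌊(p−1)^{1/q}⌋^k + 1; that is, there is a Gallai-k-coloring of the complete graph on ⌊(p−1)^{1/q}⌋^k vertices in which every set of p vertices spans edges in at least q+1 distinct colors. -/

import Mathlib

open Finset

/-- A Gallai coloring: a symmetric edge-coloring of the complete graph on `V`
with no rainbow triangle. -/
def IsGallai {V β : Type*} (c : V → V → β) : Prop :=
  (∀ a b, c a b = c b a) ∧
  ∀ a b d : V, a ≠ b → a ≠ d → b ≠ d →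
    ¬(c a b ≠ c a d ∧ c a b ≠ c b d ∧ c a d ≠ c b d)

/-- The set of colors appearing on edges inside the vertex set `S`. -/
def colorsOn {V β : Type*} [DecidableEq V] [DecidableEq β]
    (c : V → V → β) (S : Finset V) : Finset β :=
  ((S ×ˢ S).filter fun p => p.1 ≠ p.2).image fun p => c p.1 p.2

/-- `gallaiNum k q p` is the smallest positive `n` such that every Gallai-`k`-coloring
of `K_n` contains a set of `p` vertices whose induced edges use at most `q` colors. -/
noncomputable def gallaiNum (k q p : ℕ) : ℕ :=
  sInf {n : ℕ | 0 < n ∧ ∀ c : Fin n → Fin n → Fin k, IsGallai c →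
    ∃ S : Finset (Fin n), S.card = p ∧ (colorsOn c S).card ≤ q}

/-!
Identify the vertices with words in `Fin m ^ k`, `m = ⌊(p - 1) ^ (1 / q)⌋`, and colour a pair of
words by the first coordinate where they differ. Since `2 ^ (-firstDiff)` is an ultrametric, every
triangle is isosceles and none is rainbow. Words whose pairwise first differences lie in a set
`T` of colours are determined by their letters on `T`, so a vertex set spanning at most `q`
colours has at most `m ^ q ≤ p - 1` elements. Restricting the colouring to fewer vertices gives
the lower bound on `gallaiNum`.
-/

section Colorings

variable {V W β : Type*}

theorem IsGallai.comp {c : V → V → β} (hc : IsGallai c) (f : W ↪ V) :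
    IsGallai fun x y => c (f x) (f y) :=
  ⟨fun a b => hc.1 (f a) (f b), fun a b d hab had hbd =>
    hc.2 (f a) (f b) (f d) (f.injective.ne hab) (f.injective.ne had) (f.injective.ne hbd)⟩

variable [DecidableEq V] [DecidableEq β]

theorem mem_colorsOn {c : V → V → β} {S : Finset V} {b : β} :
    b ∈ colorsOn c S ↔ ∃ u ∈ S, ∃ v ∈ S, u ≠ v ∧ c u v = b := by
  simp only [colorsOn, mem_image, mem_filter, mem_product, Prod.exists, and_assoc]
  exact ⟨fun ⟨u, v, hu, hv, huv, h⟩ => ⟨u, hu, v, hv, huv, h⟩,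
    fun ⟨u, hu, v, hv, huv, h⟩ => ⟨u, v, hu, hv, huv, h⟩⟩

theorem colorsOn_map [DecidableEq W] (c : V → V → β) (f : W ↪ V) (S : Finset W) :
    colorsOn c (S.map f) = colorsOn (fun x y => c (f x) (f y)) S := by
  ext b
  simp only [mem_colorsOn, mem_map, exists_exists_and_eq_and, f.injective.ne_iff]

end Colorings

section Ramsey

variable {V β : Type*} [LinearOrder V] [Fintype β] [Nonempty β]

theorem exists_subset_color_eq_of_lt (c : V → V → β) (t : ℕ) {A : Finset V}
    (hA : (Fintype.card β + 1) ^ t ≤ #A) :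
    ∃ s ⊆ A, #s = t ∧ ∃ f : V → β, ∀ x ∈ s, ∀ y ∈ s, x < y → c x y = f x := by
  classical
  induction t generalizing A with
  | zero => exact ⟨∅, empty_subset A, rfl, Classical.arbitrary _, by simp⟩
  | succ t ih =>
    have hAne : A.Nonempty := card_pos.mp (lt_of_lt_of_le (by positivity) hA)
    set x := A.min' hAne
    have hx : x ∈ A := A.min'_mem hAne
    have hB : #(univ : Finset β) * (Fintype.card β + 1) ^ t ≤ #(A.erase x) := by
      rw [card_erase_of_mem hx, card_univ]
      rw [pow_succ', add_one_mul] at hA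
      have := Nat.one_le_pow t (Fintype.card β + 1) (Nat.succ_pos _)
      omega
    obtain ⟨a, -, ha⟩ := exists_le_card_fiber_of_mul_le_card_of_maps_to
      (fun y _ => mem_univ (c x y)) univ_nonempty hB
    obtain ⟨s, hs, hst, f, hf⟩ := ih ha
    have hsA : ∀ y ∈ s, y ∈ A.erase x := fun y hy => (mem_filter.mp (hs hy)).1
    have hxs : x ∉ s := fun h => (mem_erase.mp (hsA x h)).1 rfl
    refine ⟨insert x s, insert_subset hx fun y hy => mem_of_mem_erase (hsA y hy),
      by rw [card_insert_of_notMem hxs, hst], Function.update f x a, ?_⟩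
    intro u hu v hv huv
    rcases mem_insert.mp hu with rfl | hu
    · have hv : v ∈ s := (mem_insert.mp hv).resolve_left huv.ne'
      simpa using (mem_filter.mp (hs hv)).2
    · have hux : u ≠ x := ne_of_mem_of_not_mem hu hxs
      have hv : v ∈ s := (mem_insert.mp hv).resolve_left fun hvx =>
        (huv.trans_le (hvx ▸ A.min'_le u (mem_of_mem_erase (hsA u hu)))).false
      rw [Function.update_of_ne hux]
      exact hf u hu v hv huv

theorem exists_card_colorsOn_le_one [Fintype V] [DecidableEq β] (c : V → V → β)
    (hc : ∀ a b, c a b = c b a) {p : ℕ}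
    (hV : (Fintype.card β + 1) ^ (Fintype.card β * (p - 1) + 1) ≤ Fintype.card V) :
    ∃ S : Finset V, #S = p ∧ #(colorsOn c S) ≤ 1 := by
  obtain ⟨s, -, hs, f, hf⟩ := exists_subset_color_eq_of_lt c _ (A := univ) hV
  obtain ⟨a, -, ha⟩ := exists_lt_card_fiber_of_mul_lt_card_of_maps_to
    (fun y _ => mem_univ (f y)) (n := p - 1) (t := univ) (by rw [hs, card_univ]; omega)
  obtain ⟨S, hSs, hS⟩ := exists_subset_card_eq (s := {x ∈ s | f x = a}) (n := p) (by omega)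
  have hSa : ∀ u ∈ S, ∀ v ∈ S, u < v → c u v = a := fun u hu v hv huv => by
    obtain ⟨hu, rfl⟩ := mem_filter.mp (hSs hu)
    exact hf u hu v (mem_filter.mp (hSs hv)).1 huv
  refine ⟨S, hS, card_le_one.mpr fun b hb b' hb' => ?_⟩
  suffices ∀ b ∈ colorsOn c S, b = a by rw [this b hb, this b' hb']
  intro b hb
  obtain ⟨u, hu, v, hv, huv, rfl⟩ := mem_colorsOn.mp hb
  rcases huv.lt_or_gt with h | h
  · exact hSa u hu v hv h
  · rw [hc]; exact hSa v hv u hu h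

end Ramsey

theorem lt_gallaiNum {k q p N : ℕ} (hk : 0 < k) (hq : 1 ≤ q) {c : Fin N → Fin N → Fin k}
    (hc : IsGallai c) (hcS : ∀ S : Finset (Fin N), #S = p → q + 1 ≤ #(colorsOn c S)) :
    N < gallaiNum k q p := by
  have : NeZero k := ⟨hk.ne'⟩
  -- `sInf ∅ = 0`, so the Ramsey theorem is needed to make `gallaiNum` meaningful.
  unfold gallaiNum
  refine Nat.lt_of_succ_le (le_csInf ?_ ?_)
  · refine ⟨(k + 1) ^ (k * (p - 1) + 1), by positivity, fun c' hc' => ?_⟩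
    obtain ⟨S, hS, hS1⟩ := exists_card_colorsOn_le_one c' hc'.1 (p := p) (by simp)
    exact ⟨S, hS, hS1.trans hq⟩
  · rintro n ⟨-, hn⟩
    by_contra! hnN
    let f := Fin.castLEEmb (Nat.le_of_lt_succ hnN)
    obtain ⟨S, hS, hSq⟩ := hn _ (hc.comp f)
    have := hcS (S.map f) (by rw [card_map, hS])
    rw [colorsOn_map] at this
    omega

section FirstDiff

variable {ι α : Type*} [LinearOrder ι] [Fintype ι] [DecidableEq α]

/-- `i₀` is a junk value for `g = h`, a pair that `IsGallai` and `colorsOn` never look at. -/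
def firstDiff (i₀ : ι) (g h : ι → α) : ι :=
  if hgh : (univ.filter fun i => g i ≠ h i).Nonempty then
    (univ.filter fun i => g i ≠ h i).min' hgh
  else i₀

variable {i₀ : ι} {g h e : ι → α}

theorem apply_firstDiff_ne (hgh : g ≠ h) : g (firstDiff i₀ g h) ≠ h (firstDiff i₀ g h) := by
  have hne : (univ.filter fun i => g i ≠ h i).Nonempty := by
    simpa [filter_nonempty_iff] using Function.ne_iff.mp hgh
  rw [firstDiff, dif_pos hne]
  exact (mem_filter.mp (min'_mem _ hne)).2

theorem apply_eq_of_lt_firstDiff {j : ι} (hj : j < firstDiff i₀ g h) : g j = h j := by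
  by_contra hne
  have hne' : (univ.filter fun i => g i ≠ h i).Nonempty := ⟨j, by simpa using hne⟩
  rw [firstDiff, dif_pos hne'] at hj
  exact (min'_le _ j (by simpa using hne)).not_gt hj

theorem firstDiff_eq_of {i : ι} (hi : g i ≠ h i) (hlt : ∀ j < i, g j = h j) :
    firstDiff i₀ g h = i := by
  have hgh : g ≠ h := fun h' => hi (congrFun h' i)
  exact le_antisymm (not_lt.mp fun hi' => hi (apply_eq_of_lt_firstDiff hi'))
    (not_lt.mp fun hi' => apply_firstDiff_ne hgh (hlt _ hi'))

theorem firstDiff_comm (i₀ : ι) (g h : ι → α) : firstDiff i₀ g h = firstDiff i₀ h g := by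
  by_cases hgh : g = h
  · rw [hgh]
  · exact (firstDiff_eq_of (g := h) (h := g) (apply_firstDiff_ne hgh).symm
      fun j hj => (apply_eq_of_lt_firstDiff hj).symm).symm

/-- Every triangle is isosceles for the ultrametric `2 ^ (-firstDiff)`. -/
theorem firstDiff_eq_of_lt (hgh : g ≠ h) (hlt : firstDiff i₀ g h < firstDiff i₀ g e) :
    firstDiff i₀ h e = firstDiff i₀ g h :=
  firstDiff_eq_of
    (fun hhe => apply_firstDiff_ne hgh ((apply_eq_of_lt_firstDiff hlt).trans hhe.symm))
    fun _ hj => (apply_eq_of_lt_firstDiff hj).symm.trans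
      (apply_eq_of_lt_firstDiff (hj.trans hlt))

theorem isGallai_firstDiff (i₀ : ι) : IsGallai (firstDiff (α := α) i₀) := by
  refine ⟨firstDiff_comm i₀, fun a b d hab had hbd ⟨h₁, h₂, h₃⟩ => ?_⟩
  rcases lt_trichotomy (firstDiff i₀ a b) (firstDiff i₀ a d) with h | h | h
  · exact h₂ (firstDiff_eq_of_lt hab h).symm
  · exact h₁ h
  · exact h₃ (by rw [firstDiff_comm i₀ b, firstDiff_eq_of_lt had h])

/-- Vertices whose pairwise first differences lie in `T` are determined by their values on
`T`. -/
theorem card_le_pow_card_colorsOn_firstDiff [Fintype α] (i₀ : ι) (S : Finset (ι → α)) :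
    #S ≤ Fintype.card α ^ #(colorsOn (firstDiff i₀) S) := by
  set T := colorsOn (firstDiff i₀) S
  have hinj : Set.InjOn (fun (g : ι → α) (i : T) => g i) S := fun g hg h hh hgh => by
    by_contra hne
    have hT : firstDiff i₀ g h ∈ T := mem_colorsOn.mpr ⟨g, hg, h, hh, hne, rfl⟩
    exact apply_firstDiff_ne hne (congrFun hgh ⟨_, hT⟩)
  simpa using card_le_card_of_injOn _ (fun _ _ => mem_univ _) hinj

theorem exists_isGallai_card_le_pow (m : ℕ) {k : ℕ} (hk : 0 < k) :
    ∃ c : Fin (m ^ k) → Fin (m ^ k) → Fin k, IsGallai c ∧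
      ∀ S : Finset (Fin (m ^ k)), #S ≤ m ^ #(colorsOn c S) := by
  let e : Fin (m ^ k) ↪ (Fin k → Fin m) := finFunctionFinEquiv.symm.toEmbedding
  refine ⟨fun x y => firstDiff ⟨0, hk⟩ (e x) (e y), (isGallai_firstDiff _).comp e, fun S => ?_⟩
  simpa [colorsOn_map] using card_le_pow_card_colorsOn_firstDiff ⟨0, hk⟩ (S.map e)

end FirstDiff

theorem floor_rpow_one_div_pow_le (n : ℕ) {q : ℕ} (hq : q ≠ 0) :
    ⌊(n : ℝ) ^ ((1 : ℝ) / q)⌋₊ ^ q ≤ n := by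
  rw [one_div]
  have hfloor := Nat.floor_le (Real.rpow_nonneg (Nat.cast_nonneg n) (q : ℝ)⁻¹)
  have := pow_le_pow_left₀ (Nat.cast_nonneg _) hfloor q
  rw [Real.rpow_inv_natCast_pow (Nat.cast_nonneg n) hq] at this
  exact_mod_cast this

theorem gallaiNum_qth_root_lower (p q k : ℕ) (hq : 1 ≤ q) (hpq : 2 ^ q ≤ p - 1)
    (hk : q ≤ k) :
    ⌊((p : ℝ) - 1) ^ ((1 : ℝ) / (q : ℝ))⌋₊ ^ k + 1 ≤ gallaiNum k q p ∧
    ∃ c : Fin (⌊((p : ℝ) - 1) ^ ((1 : ℝ) / (q : ℝ))⌋₊ ^ k) →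
          Fin (⌊((p : ℝ) - 1) ^ ((1 : ℝ) / (q : ℝ))⌋₊ ^ k) → Fin k, IsGallai c ∧
      ∀ S : Finset (Fin (⌊((p : ℝ) - 1) ^ ((1 : ℝ) / (q : ℝ))⌋₊ ^ k)), S.card = p →
        q + 1 ≤ (colorsOn c S).card := by
  have hp : 2 ≤ p := by have := Nat.one_le_two_pow (n := q); omega
  have hpR : (p : ℝ) - 1 = ((p - 1 : ℕ) : ℝ) := by rw [Nat.cast_sub (by omega), Nat.cast_one]
  set m := ⌊((p : ℝ) - 1) ^ ((1 : ℝ) / (q : ℝ))⌋₊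
  have hmq : m ^ q ≤ p - 1 := by
    simpa only [m, hpR] using floor_rpow_one_div_pow_le (p - 1) (q := q) (by omega)
  have hm : 0 < m := Nat.floor_pos.mpr <| Real.one_le_rpow
    (by rw [hpR]; exact_mod_cast (by omega : 1 ≤ p - 1)) (by positivity)
  obtain ⟨c, hc, hcard⟩ := exists_isGallai_card_le_pow m (by omega : 0 < k)
  have hcolors : ∀ S : Finset (Fin (m ^ k)), #S = p → q + 1 ≤ #(colorsOn c S) := by
    intro S hS
    by_contra! hSq
    have := (hS ▸ hcard S).trans (Nat.pow_le_pow_right hm (Nat.le_of_lt_succ hSq))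
    omega
  exact ⟨lt_gallaiNum (by omega) hq hc hcolors, c, hc, hcolors⟩
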